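/- Let H be a finite-dimensional commutative associative algebra over a field, with a linear functional l : H → k, and let (r_I) be a basis of H. Define the matrices F_I by (F_I)_{JK} = l(r_I · r_J · r_K), and suppose that for some index J₀ the basis element r_{J₀} equals the unit of H and the matrix F_{J₀} is invertible. Then for all indices I, K: F_I · F_{J₀}⁻¹ · F_K = F_K · F_{J₀}⁻¹ · F_I. -/

import Mathlib

/-!
Writing `G` for the Gram matrix of `(x, y) ↦ l (x * y)` and `M x` for the matrix of multiplication
by `x`, every `F_P` factors as `G * M (r P)`, and `F_{J₀} = G` since `r J₀ = 1`. Hence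
`F_I G⁻¹ F_K = G * M (r I) * M (r K)`, which is symmetric in `I, K` because `M` is an algebra
homomorphism out of a commutative algebra.
-/

open LinearMap Algebra

theorem Matrix.mul_mul_nonsing_inv_mul_comm {n R : Type*} [Fintype n] [DecidableEq n] [CommRing R]
    {G M N : Matrix n n R} (hG : IsUnit G.det) (hMN : Commute M N) :
    G * M * G⁻¹ * (G * N) = G * N * G⁻¹ * (G * M) := by
  simp only [Matrix.mul_assoc, Matrix.nonsing_inv_mul_cancel_left _ _ hG, hMN.eq]

theorem toMatrix₂_mul_compr₂_mul_leftMulMatrix {k A ι : Type*} [CommRing k]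
    [CommRing A] [Algebra k A] [Fintype ι] [DecidableEq ι] (r : Module.Basis ι k A)
    (l : A →ₗ[k] k) (x : A) :
    toMatrix₂ r r ((mul k A).compr₂ l) * leftMulMatrix r x =
      Matrix.of (fun J K => l (x * r J * r K)) := by
  rw [leftMulMatrix_apply, ← toMatrix₂_compl₂]
  ext J K
  simp only [Matrix.of_apply, toMatrix₂_apply, compl₂_apply, compr₂_apply, mul_apply',
    coe_lmul_eq_mul]
  congr 1; ring

/-- WDVV-type commutation: for a finite-dimensional commutative associative unital algebra H
over a field, a linear functional l, a basis (r_I) with r_{J₀} = 1 and the matrices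
(F_I)_{JK} = l(r_I r_J r_K), if F_{J₀} is invertible then
F_I · F_{J₀}⁻¹ · F_K = F_K · F_{J₀}⁻¹ · F_I. -/
theorem wdvv_commutation {k : Type*} [Field k] {A : Type*} [CommRing A] [Algebra k A]
    {ι : Type*} [Fintype ι] [DecidableEq ι]
    (r : Module.Basis ι k A) (l : A →ₗ[k] k)
    (F : ι → Matrix ι ι k)
    (hF : ∀ I J K, F I J K = l (r I * r J * r K))
    (J₀ : ι) (hunit : r J₀ = 1) (hinv : IsUnit (F J₀).det)
    (I K : ι) :
    F I * (F J₀)⁻¹ * F K = F K * (F J₀)⁻¹ * F I := by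
  set G := toMatrix₂ r r ((mul k A).compr₂ l)
  have hFG : ∀ P, F P = G * leftMulMatrix r (r P) := fun P => by
    rw [toMatrix₂_mul_compr₂_mul_leftMulMatrix]
    ext J K
    exact hF P J K
  have hG : F J₀ = G := by rw [hFG, hunit, map_one, Matrix.mul_one]
  rw [hFG I, hFG K, hG]
  exact Matrix.mul_mul_nonsing_inv_mul_comm (hG ▸ hinv) ((Commute.all _ _).map _)
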